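/- On the product graph V = ℤ^N × W, where W is a finite weighted graph, with edge structure (x₁,w₁) ∼ (x₂,w₂) iff (x₁ = x₂ and w₁ ∼ w₂) or (x₁ ∼ x₂ and w₁ = w₂), edge weights ω_V equal to 1 on lattice edges and ω_W(w₁,w₂) on fiber edges, node measure μ_V(x,w) = max{2N, μ_W(w)}, and distance d_V((x,w),(y,z)) = sqrt(|x−y|² + d_W(w,z)²), the function d_V²(·,(0,w₀)) has bounded Laplacian: there exists C > 0 with |Δ_V d_V²((x,w),(0,w₀))| ≤ C for all (x,w) ∈ V. -/

import Mathlib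

open scoped BigOperators

/-- Edge weights of the product graph `ℤ^N × W`: weight `1` on lattice edges
(nearest neighbours in `ℤ^N` with equal fiber component) and `ω_W(w₁,w₂)` on
fiber edges (equal lattice component). -/
noncomputable def prodWeight {N : ℕ} {W : Type*} [DecidableEq W]
    (ωW : W → W → ℝ) (p q : (Fin N → ℤ) × W) : ℝ :=
  (if p.2 = q.2 ∧ (∑ i, |p.1 i - q.1 i|) = 1 then 1 else 0)
    + (if p.1 = q.1 then ωW p.2 q.2 else 0)

/-- Node measure of the product graph: `μ_V(x,w) = max{2N, μ_W(w)}`. -/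
noncomputable def prodMeasure (N : ℕ) {W : Type*} (μW : W → ℝ)
    (p : (Fin N → ℤ) × W) : ℝ :=
  max (2 * N : ℝ) (μW p.2)

/-- The weighted Laplacian of the product graph. -/
noncomputable def prodLap {N : ℕ} {W : Type*} [DecidableEq W]
    (ωW : W → W → ℝ) (μW : W → ℝ)
    (f : (Fin N → ℤ) × W → ℝ) (p : (Fin N → ℤ) × W) : ℝ :=
  (prodMeasure N μW p)⁻¹ * ∑ᶠ q, prodWeight ωW p q * (f q - f p)

/-- The distance `d_V((x,w),(y,z)) = sqrt(|x-y|² + d_W(w,z)²)` on `ℤ^N × W`. -/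
noncomputable def prodDist (N : ℕ) {W : Type*} (dW : W → W → ℝ)
    (p q : (Fin N → ℤ) × W) : ℝ :=
  Real.sqrt ((∑ i, ((p.1 i - q.1 i : ℤ) : ℝ) ^ 2) + dW p.2 q.2 ^ 2)

lemma sum_abs_eq_one {N : ℕ} (δ : Fin N → ℤ) (h : ∑ i, |δ i| = 1) :
    ∃ i, (δ i = 1 ∨ δ i = -1) ∧ ∀ j, j ≠ i → δ j = 0 := by
  have hne : ∃ i ∈ Finset.univ, |δ i| ≠ 0 := by
    by_contra hc
    push_neg at hc
    rw [Finset.sum_congr rfl (fun i _ => hc i (Finset.mem_univ i))] at h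
    simp at h
  obtain ⟨i, -, hi⟩ := hne
  have h1 : |δ i| ≤ 1 := by
    rw [← h]
    exact Finset.single_le_sum (f := fun j => |δ j|) (fun j _ => abs_nonneg _)
      (Finset.mem_univ i)
  have h2 : 1 ≤ |δ i| := Int.one_le_abs (by simpa using hi)
  have habs : |δ i| = 1 := le_antisymm h1 h2
  have h3 : ∑ j ∈ Finset.univ.erase i, |δ j| = 0 := by
    have h4 := Finset.add_sum_erase Finset.univ (fun j => |δ j|) (Finset.mem_univ i)
    omega
  refine ⟨i, (abs_eq (by norm_num)).mp habs, fun j hj => ?_⟩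
  have := (Finset.sum_eq_zero_iff_of_nonneg (fun k _ => abs_nonneg (δ k))).mp h3 j
    (Finset.mem_erase.mpr ⟨hj, Finset.mem_univ j⟩)
  simpa using this

/-- On the product graph `ℤ^N × W` with `W` finite, the square of the distance
from `(0,w₀)` has bounded Laplacian. -/
theorem prodLap_dist_sq_bounded (N : ℕ) (hN : 0 < N)
    {W : Type*} [Fintype W] [DecidableEq W] [Nonempty W]
    (ωW : W → W → ℝ) (μW : W → ℝ)
    (hμW : ∀ w, 0 < μW w)
    (hωW_symm : ∀ w z, ωW w z = ωW z w)
    (hωW_diag : ∀ w, ωW w w = 0)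
    (hωW_nonneg : ∀ w z, 0 ≤ ωW w z)
    (dW : W → W → ℝ)
    (hdW_symm : ∀ w z, dW w z = dW z w)
    (hdW_diag : ∀ w, dW w w = 0)
    (hdW_nonneg : ∀ w z, 0 ≤ dW w z)
    (hdW_tri : ∀ w z r, dW w z ≤ dW w r + dW r z)
    (w₀ : W) :
    ∃ C > 0, ∀ p : (Fin N → ℤ) × W,
      |prodLap ωW μW (fun q => prodDist N dW q (0, w₀) ^ 2) p| ≤ C := by
  classical
  set g : W → ℝ := fun v => ∑ u, ωW v u * (dW u w₀ ^ 2 - dW v w₀ ^ 2) with hg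
  have h2Npos : (0:ℝ) < 2 * N := by positivity
  refine ⟨1 + (2*N:ℝ)⁻¹ * (∑ v, |g v|), by positivity, ?_⟩
  rintro ⟨x, w⟩
  set F : (Fin N → ℤ) × W → ℝ := fun q => (∑ i, ((q.1 i : ℤ) : ℝ) ^ 2) + dW q.2 w₀ ^ 2
    with hFdef
  have hF : (fun q : (Fin N → ℤ) × W => prodDist N dW q (0, w₀) ^ 2) = F := by
    funext q
    rw [prodDist, Real.sq_sqrt (by positivity)]
    simp [hFdef]
  set ε : Bool → ℤ := fun b' => if b' then 1 else -1 with hε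
  set φ : Fin N × Bool → (Fin N → ℤ) × W :=
    fun ib => (Function.update x ib.1 (x ib.1 + ε ib.2), w) with hφ
  set a : (Fin N → ℤ) × W → ℝ := fun q =>
    (if w = q.2 ∧ (∑ i, |x i - q.1 i|) = 1 then (1:ℝ) else 0) * (F q - F (x, w)) with ha
  set b : (Fin N → ℤ) × W → ℝ := fun q =>
    (if x = q.1 then ωW w q.2 else 0) * (F q - F (x, w)) with hb
  set s1 : Finset ((Fin N → ℤ) × W) := Finset.univ.image φ with hs1
  set s2 : Finset ((Fin N → ℤ) × W) := Finset.univ.image (fun v : W => (x, v)) with hs2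
  have hεabs : ∀ b', |ε b'| = 1 := by intro b'; cases b' <;> simp [hε]
  have hsupa : Function.support a ⊆ ↑s1 := by
    intro q hq
    have hcond : w = q.2 ∧ (∑ i, |x i - q.1 i|) = 1 := by
      by_contra hc
      simp [ha, hc] at hq
    obtain ⟨i, hi1, hi0⟩ := sum_abs_eq_one (fun i => x i - q.1 i) hcond.2
    simp only [hs1, Finset.coe_image, Set.mem_image]
    refine ⟨(i, if x i - q.1 i = 1 then false else true), by simp, ?_⟩
    have hq1 : q.1 = Function.update x i (x i + ε (if x i - q.1 i = 1 then false else true)) := by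
      funext j
      rcases eq_or_ne j i with rfl | hj
      · rw [Function.update_self]
        rcases hi1 with h | h
        · simp [h, hε]; omega
        · have : x j - q.1 j ≠ 1 := by omega
          simp [this, hε]; omega
      · rw [Function.update_of_ne hj]
        have := hi0 j hj
        omega
    simp only [hφ]
    exact Prod.ext hq1.symm hcond.1
  have hsupb : Function.support b ⊆ ↑s2 := by
    intro q hq
    have hcond : x = q.1 := by
      by_contra hc
      simp [hb, hc] at hq
    simp only [hs2, Finset.coe_image, Set.mem_image]
    exact ⟨q.2, by simp, Prod.ext hcond rfl⟩
  have hfina : (Function.support a).Finite := Set.Finite.subset s1.finite_toSet hsupa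
  have hfinb : (Function.support b).Finite := Set.Finite.subset s2.finite_toSet hsupb
  have hφinj : ∀ ib ∈ Finset.univ, ∀ ib' ∈ Finset.univ,
      φ ib = φ ib' → ib = (ib' : Fin N × Bool) := by
    rintro ⟨i, c⟩ - ⟨i', c'⟩ - hEq
    have h1 : Function.update x i (x i + ε c) = Function.update x i' (x i' + ε c') :=
      congrArg Prod.fst hEq
    have hεne : ∀ b', ε b' ≠ 0 := by intro b'; cases b' <;> simp [hε]
    have hii : i = i' := by
      by_contra hii
      have := congrFun h1 i
      rw [Function.update_self, Function.update_of_ne hii] at this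
      exact hεne c (by omega)
    subst hii
    have := congrFun h1 i
    rw [Function.update_self, Function.update_self] at this
    have hcc : ε c = ε c' := by omega
    have hεt : ε true = 1 := by simp [hε]
    have hεf : ε false = -1 := by simp [hε]
    have : c = c' := by
      cases c <;> cases c' <;> first | rfl | (exfalso; omega)
    exact Prod.ext rfl this
  have hterm : ∀ ib : Fin N × Bool,
      a (φ ib) = ((x ib.1 + ε ib.2 : ℤ) : ℝ) ^ 2 - ((x ib.1 : ℤ) : ℝ) ^ 2 := by
    rintro ⟨i, c⟩
    have hdist : (∑ j, |x j - (φ (i, c)).1 j|) = 1 := by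
      rw [Finset.sum_eq_single i]
      · simp [hφ, Function.update_self, hεabs c]
      · intro j _ hj
        simp [hφ, Function.update_of_ne hj]
      · simp
    have hcond : w = (φ (i, c)).2 ∧ (∑ j, |x j - (φ (i, c)).1 j|) = 1 := ⟨rfl, hdist⟩
    have hdist' : (∑ j, |x j - Function.update x i (x i + ε c) j|) = 1 := by
      simpa [hφ] using hdist
    simp only [ha]
    rw [if_pos ⟨rfl, hdist'⟩, one_mul]
    have hFφ : F (φ (i, c)) - F (x, w) =
        ((x i + ε c : ℤ) : ℝ) ^ 2 - ((x i : ℤ) : ℝ) ^ 2 := by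
      simp only [hFdef, hφ]
      rw [show ((∑ j, ((Function.update x i (x i + ε c) j : ℤ) : ℝ) ^ 2) + dW w w₀ ^ 2)
          - ((∑ j, ((x j : ℤ) : ℝ) ^ 2) + dW w w₀ ^ 2)
          = ∑ j, (((Function.update x i (x i + ε c) j : ℤ) : ℝ) ^ 2 - ((x j : ℤ) : ℝ) ^ 2)
          by rw [Finset.sum_sub_distrib]; ring]
      rw [Finset.sum_eq_single i]
      · rw [Function.update_self]
      · intro j _ hj
        rw [Function.update_of_ne hj]; ring
      · simp
    rw [hFφ]
  have h1 : ∑ᶠ q, a q = 2 * N := by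
    rw [finsum_eq_sum_of_support_subset a hsupa, hs1,
      Finset.sum_image hφinj]
    rw [Finset.sum_congr rfl (fun ib _ => hterm ib)]
    rw [Fintype.sum_prod_type]
    have : ∀ i : Fin N, ∑ c : Bool,
        (((x i + ε c : ℤ) : ℝ) ^ 2 - ((x i : ℤ) : ℝ) ^ 2) = 2 := by
      intro i
      rw [Fintype.sum_bool]
      simp only [hε, if_true, if_false]
      push_cast
      ring
    rw [Finset.sum_congr rfl (fun i _ => this i)]
    simp [mul_comm]
  have h2 : ∑ᶠ q, b q = g w := by
    rw [finsum_eq_sum_of_support_subset b hsupb, hs2,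
      Finset.sum_image (fun v _ v' _ h => by simpa using congrArg Prod.snd h)]
    rw [hg]
    refine Finset.sum_congr rfl fun v _ => ?_
    simp only [hb, hFdef, if_true]
    ring
  have hsplit : ∑ᶠ q, prodWeight ωW (x, w) q * (F q - F (x, w)) = 2 * N + g w := by
    have : (fun q => prodWeight ωW (x, w) q * (F q - F (x, w))) = fun q => a q + b q := by
      funext q
      simp only [prodWeight, ha, hb]
      ring
    rw [this, finsum_add_distrib hfina hfinb, h1, h2]
  have hfin_eq : ∑ᶠ q : (Fin N → ℤ) × W, prodWeight ωW (x, w) q *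
      (prodDist N dW q (0, w₀) ^ 2 - prodDist N dW (x, w) (0, w₀) ^ 2) = 2 * N + g w := by
    rw [← hsplit]
    refine finsum_congr fun q => ?_
    rw [show prodDist N dW q (0, w₀) ^ 2 = F q from congrFun hF q,
      show prodDist N dW (x, w) (0, w₀) ^ 2 = F (x, w) from congrFun hF (x, w)]
  rw [prodLap, hfin_eq]
  set μ : ℝ := prodMeasure N μW (x, w) with hμdef
  have hμ2N : (2 * N : ℝ) ≤ μ := le_max_left _ _
  have hμpos : 0 < μ := lt_of_lt_of_le h2Npos hμ2N
  rw [abs_mul, abs_of_pos (inv_pos.mpr hμpos)]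
  have habs : |2 * (N:ℝ) + g w| ≤ 2 * N + |g w| := by
    calc |2 * (N:ℝ) + g w| ≤ |2 * (N:ℝ)| + |g w| := abs_add_le _ _
    _ = 2 * N + |g w| := by rw [abs_of_pos h2Npos]
  calc μ⁻¹ * |2 * (N:ℝ) + g w| ≤ (2*N:ℝ)⁻¹ * (2 * N + |g w|) := by
        apply mul_le_mul (inv_anti₀ h2Npos hμ2N) habs (abs_nonneg _)
          (le_of_lt (inv_pos.mpr h2Npos))
    _ = 1 + (2*N:ℝ)⁻¹ * |g w| := by
        field_simp
    _ ≤ 1 + (2*N:ℝ)⁻¹ * (∑ v, |g v|) := by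
        gcongr
        exact Finset.single_le_sum (f := fun v => |g v|) (fun v _ => abs_nonneg _)
          (Finset.mem_univ w)
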